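/- arXiv:1502.01255 — 2 statements merged into one kernel-verified Lean document; each statement's English description precedes it below -/
import Mathlib

section
/- Let G be a finite (possibly vertex-colored) simple graph with adjacency matrix A, and let X be a fractional automorphism of G, i.e., a doubly stochastic matrix with AX = XA (and X[u,v] = 0 whenever u and v have different colors). Then X is block-diagonal with respect to the stable partition of G: X[u,v] = 0 whenever u and v lie in different cells of Π_G. -/
namespace ColorRef

variable {V W : Type}

/-- `crRel G c i u v` means vertices `u` and `v` get the same color in round `i`
of color refinement on `G` with initial coloring `c`. -/
def crRel (G : SimpleGraph V) {α : Type} (c : V → α) : ℕ → V → V → Prop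
  | 0 => fun u v => c u = c v
  | (i + 1) => fun u v => crRel G c i u v ∧
      ∀ w : V, {a : V | G.Adj u a ∧ crRel G c i a w}.ncard =
               {a : V | G.Adj v a ∧ crRel G c i a w}.ncard

/-- `u` and `v` get the same color in the stable coloring. -/
def stableRel (G : SimpleGraph V) {α : Type} (c : V → α) (u v : V) : Prop :=
  ∀ i : ℕ, crRel G c i u v

/-- `X` is a cell of the stable partition of `(G, c)`. -/
def IsCell (G : SimpleGraph V) {α : Type} (c : V → α) (X : Set V) : Prop :=
  ∃ u : V, X = {v : V | stableRel G c u v}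

/-- The multisets of round-`i` colors on the two sides of the disjoint union `G ⊕g H`
coincide for every `i`, i.e. color refinement does not distinguish `G` and `H`. -/
def crIndist (G : SimpleGraph V) (cG : V → ℕ) (H : SimpleGraph W) (cH : W → ℕ) : Prop :=
  ∀ (i : ℕ) (w : V ⊕ W),
    {u : V | crRel (G ⊕g H) (Sum.elim cG cH) i (Sum.inl u) w}.ncard =
    {v : W | crRel (G ⊕g H) (Sum.elim cG cH) i (Sum.inr v) w}.ncard

/-- `G` (with coloring `cG`) is amenable: any finite colored graph `H` that color
refinement fails to distinguish from `G` is color-preservingly isomorphic to `G`. -/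
def Amenable (G : SimpleGraph V) (cG : V → ℕ) : Prop :=
  ∀ (W : Type) (_ : Fintype W) (H : SimpleGraph W) (cH : W → ℕ),
    crIndist G cG H cH → ∃ φ : G ≃g H, ∀ v : V, cH (φ v) = cG v

/-! ### Induced subgraphs on cells and between cells -/

def CellEmpty (G : SimpleGraph V) (X : Set V) : Prop := ∀ u ∈ X, ∀ v ∈ X, ¬ G.Adj u v

def CellComplete (G : SimpleGraph V) (X : Set V) : Prop :=
  ∀ u ∈ X, ∀ v ∈ X, u ≠ v → G.Adj u v

/-- `G[X]` is a perfect matching `mK₂` on `X`. -/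
def CellMatching (G : SimpleGraph V) (X : Set V) : Prop :=
  ∀ u ∈ X, {v : V | v ∈ X ∧ G.Adj u v}.ncard = 1

/-- `G[X]` is the complement of a perfect matching on `X`. -/
def CellCoMatching (G : SimpleGraph V) (X : Set V) : Prop :=
  ∀ u ∈ X, {v : V | v ∈ X ∧ v ≠ u ∧ ¬ G.Adj u v}.ncard = 1

/-- `G[X]` is the 5-cycle (a 2-regular graph on 5 vertices). -/
def CellC5 (G : SimpleGraph V) (X : Set V) : Prop :=
  X.ncard = 5 ∧ ∀ u ∈ X, {v : V | v ∈ X ∧ G.Adj u v}.ncard = 2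

/-- Condition A. -/
def CondA (G : SimpleGraph V) {α : Type} (c : V → α) : Prop :=
  ∀ X : Set V, IsCell G c X →
    CellEmpty G X ∨ CellComplete G X ∨ CellMatching G X ∨ CellCoMatching G X ∨ CellC5 G X

def BipEmpty (G : SimpleGraph V) (X Y : Set V) : Prop := ∀ u ∈ X, ∀ v ∈ Y, ¬ G.Adj u v

def BipComplete (G : SimpleGraph V) (X Y : Set V) : Prop := ∀ u ∈ X, ∀ v ∈ Y, G.Adj u v

/-- `G[X,Y]` is a disjoint union of stars `sK_{1,t}` with centers `X` and leaves `Y`. -/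
def BipStars (G : SimpleGraph V) (X Y : Set V) : Prop :=
  (∀ v ∈ Y, {u : V | u ∈ X ∧ G.Adj u v}.ncard = 1) ∧
  (∃ t : ℕ, ∀ u ∈ X, {v : V | v ∈ Y ∧ G.Adj u v}.ncard = t)

/-- `G[X,Y]` is the bipartite complement of a disjoint union of stars with centers `X`. -/
def BipCoStars (G : SimpleGraph V) (X Y : Set V) : Prop :=
  (∀ v ∈ Y, {u : V | u ∈ X ∧ ¬ G.Adj u v}.ncard = 1) ∧
  (∃ t : ℕ, ∀ u ∈ X, {v : V | v ∈ Y ∧ ¬ G.Adj u v}.ncard = t)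

/-- Condition B. -/
def CondB (G : SimpleGraph V) {α : Type} (c : V → α) : Prop :=
  ∀ X Y : Set V, IsCell G c X → IsCell G c Y → X ≠ Y →
    BipEmpty G X Y ∨ BipComplete G X Y ∨
    BipStars G X Y ∨ BipStars G Y X ∨ BipCoStars G X Y ∨ BipCoStars G Y X

/-- A cell is heterogeneous if the graph it induces is neither complete nor empty. -/
def Hetero (G : SimpleGraph V) (X : Set V) : Prop :=
  ¬ CellEmpty G X ∧ ¬ CellComplete G X

/-- `{X, Y}` is an anisotropic edge of the cell graph. -/
def AnisoEdge (G : SimpleGraph V) {α : Type} (c : V → α) (X Y : Set V) : Prop :=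
  IsCell G c X ∧ IsCell G c Y ∧ X ≠ Y ∧ ¬ BipEmpty G X Y ∧ ¬ BipComplete G X Y

/-- An anisotropic path in the cell graph, given as the list of its cells. -/
def AnisoPath (G : SimpleGraph V) {α : Type} (c : V → α) (L : List (Set V)) : Prop :=
  (∀ X ∈ L, IsCell G c X) ∧ L.Nodup ∧ L.Chain' (AnisoEdge G c)

/-- Condition C: no uniform anisotropic path connects two heterogeneous cells. -/
def CondC (G : SimpleGraph V) {α : Type} (c : V → α) : Prop :=
  ¬ ∃ (X Y : Set V) (L : List (Set V)) (k : ℕ),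
      AnisoPath G c (X :: (L ++ [Y])) ∧
      (∀ Z ∈ X :: (L ++ [Y]), Z.ncard = k) ∧
      Hetero G X ∧ Hetero G Y

/-- Condition D: the cell graph has no uniform anisotropic cycle. -/
def CondD (G : SimpleGraph V) {α : Type} (c : V → α) : Prop :=
  ¬ ∃ (X : Set V) (L : List (Set V)) (k : ℕ),
      3 ≤ (X :: L).length ∧
      AnisoPath G c (X :: L) ∧
      List.Chain' (AnisoEdge G c) ((X :: L) ++ [X]) ∧
      (∀ Z ∈ X :: L, Z.ncard = k)

/-- Condition E: no anisotropic path `X Y₁ … Y_l Z` with `|X| < |Y₁| = … = |Y_l| > |Z|`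
and no anisotropic cycle `X Y₁ … Y_l X` with `|X| < |Y₁| = … = |Y_l|`. -/
def CondE (G : SimpleGraph V) {α : Type} (c : V → α) : Prop :=
  (¬ ∃ (X Z : Set V) (Ys : List (Set V)) (k : ℕ),
      Ys ≠ [] ∧
      AnisoPath G c (X :: (Ys ++ [Z])) ∧
      (∀ Y ∈ Ys, Y.ncard = k) ∧ X.ncard < k ∧ Z.ncard < k) ∧
  (¬ ∃ (X : Set V) (Ys : List (Set V)) (k : ℕ),
      2 ≤ Ys.length ∧
      AnisoPath G c (X :: Ys) ∧
      List.Chain' (AnisoEdge G c) ((X :: Ys) ++ [X]) ∧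
      (∀ Y ∈ Ys, Y.ncard = k) ∧ X.ncard < k)

/-- Condition F: no anisotropic path `X Y₁ … Y_l` with `|X| < |Y₁| = … = |Y_l|`
whose last cell `Y_l` is heterogeneous. -/
def CondF (G : SimpleGraph V) {α : Type} (c : V → α) : Prop :=
  ¬ ∃ (X : Set V) (Ys : List (Set V)) (Yl : Set V) (k : ℕ),
      Ys ≠ [] ∧
      AnisoPath G c (X :: Ys) ∧
      (∀ Y ∈ Ys, Y.ncard = k) ∧ X.ncard < k ∧
      Ys.getLast? = some Yl ∧ Hetero G Yl

/-- The type of cells of the stable partition. -/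
def Cell (G : SimpleGraph V) {α : Type} (c : V → α) : Type := {X : Set V // IsCell G c X}

/-- The graph on the cells of `Π_G` formed by the anisotropic edges of the cell graph;
its connected components are the anisotropic components of `C(G)`. -/
def anisoGraph (G : SimpleGraph V) {α : Type} (c : V → α) : SimpleGraph (Cell G c) where
  Adj A B := AnisoEdge G c A.val B.val
  symm := by
    refine ⟨?_⟩
    rintro A B ⟨h1, h2, h3, h4, h5⟩
    refine ⟨h2, h1, Ne.symm h3, fun h => h4 ?_, fun h => h5 ?_⟩
    · exact fun u hu v hv hadj => h v hv u hu hadj.symm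
    · exact fun u hu v hv => (h v hv u hu).symm
  loopless := ⟨fun A h => h.2.2.1 rfl⟩

/-- Condition G: every anisotropic component is a tree, and rooting it at any cell `R`
of minimum cardinality in its component, `|X| ≤ |Y|` along edges directed away from `R`. -/
def CondG (G : SimpleGraph V) {α : Type} (c : V → α) : Prop :=
  (anisoGraph G c).IsAcyclic ∧
  ∀ R X Y : Cell G c,
    (∀ Z : Cell G c, (anisoGraph G c).Reachable R Z → R.val.ncard ≤ Z.val.ncard) →
    (anisoGraph G c).Reachable R X →
    (anisoGraph G c).Adj X Y →
    (anisoGraph G c).dist R Y = (anisoGraph G c).dist R X + 1 →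
    X.val.ncard ≤ Y.val.ncard

/-- Condition H: every anisotropic component contains at most one heterogeneous cell,
and such a cell has minimum cardinality within its component. -/
def CondH (G : SimpleGraph V) {α : Type} (c : V → α) : Prop :=
  (∀ X Y : Cell G c, Hetero G X.val → Hetero G Y.val →
      (anisoGraph G c).Reachable X Y → X = Y) ∧
  (∀ X Z : Cell G c, Hetero G X.val →
      (anisoGraph G c).Reachable X Z → X.val.ncard ≤ Z.val.ncard)

/-! ### Matrices, fractional automorphisms and compactness -/

open Classical in
/-- The real adjacency matrix of `G`. -/
noncomputable def adjMat (G : SimpleGraph V) : Matrix V V ℝ :=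
  Matrix.of fun u v => if G.Adj u v then (1 : ℝ) else 0

open Classical in
/-- The permutation matrix of a permutation `σ`. -/
noncomputable def permMat (σ : Equiv.Perm V) : Matrix V V ℝ :=
  Matrix.of fun i j => if σ j = i then (1 : ℝ) else 0

def IsDoublyStochastic [Fintype V] (X : Matrix V V ℝ) : Prop :=
  (∀ i j, 0 ≤ X i j) ∧ (∀ i, ∑ j, X i j = 1) ∧ (∀ j, ∑ i, X i j = 1)

def IsAutomorphism (G : SimpleGraph V) (σ : Equiv.Perm V) : Prop :=
  ∀ u v : V, G.Adj (σ u) (σ v) ↔ G.Adj u v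

/-- `X` is a convex combination of permutation matrices of automorphisms of `G`. -/
def IsConvexCombOfAut [Fintype V] (G : SimpleGraph V) (X : Matrix V V ℝ) : Prop :=
  ∃ (s : Finset (Equiv.Perm V)) (w : Equiv.Perm V → ℝ),
    (∀ σ ∈ s, IsAutomorphism G σ) ∧ (∀ σ ∈ s, 0 ≤ w σ) ∧
    (∑ σ ∈ s, w σ) = 1 ∧ X = ∑ σ ∈ s, w σ • permMat σ

/-- `G` is compact: the polytope of fractional automorphisms of `G` is the convex hull
of the permutation matrices of automorphisms of `G`. -/
def CompactGraph [Fintype V] (G : SimpleGraph V) : Prop :=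
  ∀ X : Matrix V V ℝ, IsDoublyStochastic X → adjMat G * X = X * adjMat G →
    IsConvexCombOfAut G X

/-! ### Equitable partitions, Godsil, Tinhofer, refinable, discrete, unigraphs -/

/-- The partition given by the classes of the equivalence `r` is equitable. -/
def Equitable (G : SimpleGraph V) (r : V → V → Prop) : Prop :=
  ∀ u v w : V, r u v →
    {a : V | G.Adj u a ∧ r a w}.ncard = {a : V | G.Adj v a ∧ r a w}.ncard

/-- The partition given by `r` is the orbit partition of a subgroup of `Aut(G)`. -/
def IsOrbitPartition (G : SimpleGraph V) (r : V → V → Prop) : Prop :=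
  ∃ S : Subgroup (Equiv.Perm V), (∀ σ ∈ S, IsAutomorphism G σ) ∧
    (∀ u v : V, r u v ↔ ∃ σ ∈ S, σ u = v)

/-- `G` is a Godsil graph. -/
def Godsil (G : SimpleGraph V) : Prop :=
  ∀ r : V → V → Prop, Equivalence r → Equitable G r → IsOrbitPartition G r

open Classical in
/-- The coloring of the disjoint union after individualizing the pairs in `F`:
the `j`-th individualized pair gets fresh color `some j`, all other vertices keep
their (uniform) original color `none`. -/
noncomputable def tinColor (F : List (V × W)) : V ⊕ W → Option ℕ
  | Sum.inl u => F.findIdx? (fun p => decide (p.1 = u))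
  | Sum.inr v => F.findIdx? (fun p => decide (p.2 = v))

/-- The stable coloring relation on `G ⊕g H` after individualizing the pairs in `F`. -/
def tinRel (G : SimpleGraph V) (H : SimpleGraph W) (F : List (V × W)) :
    (V ⊕ W) → (V ⊕ W) → Prop :=
  stableRel (G ⊕g H) (tinColor F)

/-- The multisets of stable colors on the two sides agree after individualizing `F`. -/
def tinIndist (G : SimpleGraph V) (H : SimpleGraph W) (F : List (V × W)) : Prop :=
  ∀ w : V ⊕ W,
    {u : V | tinRel G H F (Sum.inl u) w}.ncard =
    {v : W | tinRel G H F (Sum.inr v) w}.ncard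

/-- The pair `p` is a legal individualization choice at the stage reached after `F`. -/
def ValidStep (G : SimpleGraph V) (H : SimpleGraph W) (F : List (V × W)) (p : V × W) : Prop :=
  tinIndist G H F ∧
  tinRel G H F (Sum.inl p.1) (Sum.inr p.2) ∧
  2 ≤ {u' : V | tinRel G H F (Sum.inl u') (Sum.inl p.1)}.ncard ∧
  2 ≤ {v' : W | tinRel G H F (Sum.inr v') (Sum.inr p.2)}.ncard

/-- `F` is a legal sequence of individualization choices of Tinhofer's algorithm. -/
def ValidRun (G : SimpleGraph V) (H : SimpleGraph W) (F : List (V × W)) : Prop :=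
  ∀ j : Fin F.length, ValidStep G H (F.take j.val) (F.get j)

/-- After `F`, all stable color classes are singletons in `G` and in `H`. -/
def AllSingletons (G : SimpleGraph V) (H : SimpleGraph W) (F : List (V × W)) : Prop :=
  (∀ u u' : V, tinRel G H F (Sum.inl u) (Sum.inl u') → u = u') ∧
  (∀ v v' : W, tinRel G H F (Sum.inr v) (Sum.inr v') → v = v')

/-- After `F`, Tinhofer's algorithm stops. -/
def TinTerminal (G : SimpleGraph V) (H : SimpleGraph W) (F : List (V × W)) : Prop :=
  ¬ tinIndist G H F ∨ AllSingletons G H F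

/-- After `F`, Tinhofer's algorithm outputs "isomorphic": the color multisets agree,
all classes are singletons, and the color-matching map is an isomorphism. -/
def TinOutputIso (G : SimpleGraph V) (H : SimpleGraph W) (F : List (V × W)) : Prop :=
  tinIndist G H F ∧ AllSingletons G H F ∧
  (∀ (u u' : V) (v v' : W), tinRel G H F (Sum.inl u) (Sum.inr v) →
     tinRel G H F (Sum.inl u') (Sum.inr v') → (G.Adj u u' ↔ H.Adj v v'))

/-- `G` is a Tinhofer graph: for every finite `H` and every legal complete run of
Tinhofer's individualization-refinement algorithm, the output is correct. -/
def Tinhofer (G : SimpleGraph V) : Prop :=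
  ∀ (W : Type) (_ : Fintype W) (H : SimpleGraph W) (F : List (V × W)),
    ValidRun G H F → TinTerminal G H F →
    (TinOutputIso G H F ↔ Nonempty (G ≃g H))

/-- `G` is refinable: its stable partition is the orbit partition of `Aut(G)`. -/
def Refinable (G : SimpleGraph V) : Prop :=
  ∀ u v : V, stableRel G (fun _ => (0 : ℕ)) u v ↔
    ∃ σ : Equiv.Perm V, IsAutomorphism G σ ∧ σ u = v

/-- `G` is discrete: the stable partition consists of singletons. -/
def Discrete (G : SimpleGraph V) : Prop :=
  ∀ u v : V, stableRel G (fun _ => (0 : ℕ)) u v → u = v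

/-- `G` is a unigraph: it is determined up to isomorphism by its degree sequence. -/
def Unigraph (G : SimpleGraph V) : Prop :=
  ∀ (W : Type) (_ : Fintype W) (H : SimpleGraph W),
    (∃ e : V ≃ W, ∀ v : V, {w : W | H.Adj (e v) w}.ncard = {u : V | G.Adj v u}.ncard) →
    Nonempty (G ≃g H)

/-! ### Concrete graphs -/

/-- The cycle graph on `n` vertices. -/
def cycleG (n : ℕ) : SimpleGraph (Fin n) :=
  SimpleGraph.fromRel (fun u v => (u.val + 1) % n = v.val)

/-- The Petersen graph as the Kneser graph `K(5,2)`. -/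
def petersen : SimpleGraph {s : Finset (Fin 5) // s.card = 2} where
  Adj a b := Disjoint a.val b.val
  symm := ⟨fun _ _ h => h.symm⟩
  loopless := by
    refine ⟨?_⟩
    intro a h
    have h' : Disjoint a.val a.val := h
    rw [disjoint_self] at h'
    have h2 := a.2
    rw [h'] at h2
    simp at h2

/-- The Johnson graph `J(n,2)`. -/
def johnson (n : ℕ) : SimpleGraph {s : Finset (Fin n) // s.card = 2} where
  Adj a b := (a.val ∩ b.val).card = 1
  symm := by
    refine ⟨?_⟩
    intro a b h
    have h' : (a.val ∩ b.val).card = 1 := h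
    show (b.val ∩ a.val).card = 1
    rwa [Finset.inter_comm]
  loopless := by
    refine ⟨?_⟩
    intro a h
    have h' : (a.val ∩ a.val).card = 1 := h
    rw [Finset.inter_self, a.2] at h'
    omega

/-- The cell (as an element of the cell type) containing vertex `u`. -/
def vcell (G : SimpleGraph V) {α : Type} (c : V → α) (u : V) : Cell G c :=
  ⟨{v : V | stableRel G c u v}, ⟨u, rfl⟩⟩

/-- `u` and `v` lie in cells of the same anisotropic component. -/
def SameAnisoComp (G : SimpleGraph V) {α : Type} (c : V → α) (u v : V) : Prop :=
  (anisoGraph G c).Reachable (vcell G c u) (vcell G c v)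

open scoped Matrix

/-!
By induction on `i`, `X` is block diagonal with respect to the round-`i` coloring. If `u, v`
have the same round-`i` color but different numbers of neighbours in some round-`i` class `D`,
then `f = A 1_D` separates them. Block diagonality gives `X 1_D = 1_D`, so `X f = A X 1_D = f`.
A doubly stochastic matrix fixing `f` has `X u v = 0` whenever `f u ≠ f v`.
-/

def IsBlockDiagonalWrt {R : Type*} [Zero R] (r : V → V → Prop) (X : Matrix V V R) : Prop :=
  ∀ u v, ¬ r u v → X u v = 0

theorem crRel_equivalence {α : Type} (G : SimpleGraph V) (c : V → α) (i : ℕ) :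
    Equivalence (crRel G c i) := by
  induction i with
  | zero => exact ⟨fun _ => rfl, Eq.symm, Eq.trans⟩
  | succ i ih =>
    refine ⟨fun u => ⟨ih.refl u, fun _ => rfl⟩, ?_, ?_⟩
    · rintro u v ⟨h, hcount⟩
      exact ⟨ih.symm h, fun w => (hcount w).symm⟩
    · rintro u v x ⟨h, hcount⟩ ⟨h', hcount'⟩
      exact ⟨ih.trans h h', fun w => (hcount w).trans (hcount' w)⟩

theorem IsBlockDiagonalWrt.mulVec_indicator [Fintype V] {R : Type*} [NonAssocSemiring R]
    {r : V → V → Prop} [DecidableRel r] {X : Matrix V V R} (hX : IsBlockDiagonalWrt r X)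
    (hr : Equivalence r) (hrow : ∀ i, ∑ j, X i j = 1) (w : V) :
    X *ᵥ (fun a => if r a w then 1 else 0) = fun a => if r a w then 1 else 0 := by
  funext a
  simp only [Matrix.mulVec, dotProduct, mul_ite, mul_one, mul_zero]
  rw [← Finset.sum_filter]
  split_ifs with ha
  · rw [← hrow a]
    refine Finset.sum_subset (Finset.subset_univ _) fun x _ hx => hX a x fun hax => hx ?_
    exact Finset.mem_filter.2 ⟨Finset.mem_univ x, hr.trans (hr.symm hax) ha⟩
  · exact Finset.sum_eq_zero fun x hx =>
      hX a x fun hax => ha (hr.trans hax (Finset.mem_filter.1 hx).2)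

theorem adjMat_mulVec_indicator [Fintype V] (G : SimpleGraph V) (p : V → Prop)
    [DecidablePred p] (y : V) :
    (adjMat G *ᵥ fun a => if p a then 1 else 0) y = ({a | G.Adj y a ∧ p a}.ncard : ℝ) := by
  classical
  have hset : {a | G.Adj y a ∧ p a} = ↑(Finset.univ.filter fun a => G.Adj y a ∧ p a) := by
    ext a
    simp
  rw [hset, Set.ncard_coe_finset]
  simp only [Matrix.mulVec, dotProduct, adjMat, Matrix.of_apply, ite_mul, one_mul, zero_mul,
    Finset.card_filter, Nat.cast_sum, Nat.cast_ite, Nat.cast_one, Nat.cast_zero]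
  exact Finset.sum_congr rfl fun a _ => by by_cases G.Adj y a <;> by_cases p a <;> simp [*]

/-- The form `∑ y z, X y z (f y - f z)²` expands to `2 (‖f‖² - ⟪f, X f⟫) = 0`. -/
theorem IsDoublyStochastic.apply_eq_zero_of_mulVec_eq_self [Fintype V] {X : Matrix V V ℝ}
    (hX : IsDoublyStochastic X) {f : V → ℝ} (hf : X *ᵥ f = f) {u v : V} (huv : f u ≠ f v) :
    X u v = 0 := by
  obtain ⟨hnonneg, hrow, hcol⟩ := hX
  have hexpand : ∀ y, ∑ z, X y z * (f y - f z) ^ 2 =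
      f y ^ 2 * ∑ z, X y z - 2 * f y * (X *ᵥ f) y + ∑ z, X y z * f z ^ 2 := by
    intro y
    simp only [Matrix.mulVec, dotProduct, Finset.mul_sum, ← Finset.sum_sub_distrib,
      ← Finset.sum_add_distrib]
    exact Finset.sum_congr rfl fun z _ => by ring
  have hform : ∑ y, ∑ z, X y z * (f y - f z) ^ 2 = 0 :=
    calc ∑ y, ∑ z, X y z * (f y - f z) ^ 2
        = ∑ y, (f y ^ 2 - 2 * f y * f y) + ∑ y, ∑ z, X y z * f z ^ 2 := by
          simp only [hexpand, hrow, hf, mul_one, Finset.sum_add_distrib]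
      _ = ∑ y, (f y ^ 2 - 2 * f y * f y) + ∑ z, f z ^ 2 := by
          rw [Finset.sum_comm]
          simp only [← Finset.sum_mul, hcol, one_mul]
      _ = 0 := by
          rw [← Finset.sum_add_distrib]
          exact Finset.sum_eq_zero fun y _ => by ring
  have hterm_nonneg : ∀ y z, 0 ≤ X y z * (f y - f z) ^ 2 :=
    fun y z => mul_nonneg (hnonneg y z) (sq_nonneg _)
  have huv_term : X u v * (f u - f v) ^ 2 = 0 := by
    rw [Finset.sum_eq_zero_iff_of_nonneg fun y _ =>
      Finset.sum_nonneg fun z _ => hterm_nonneg y z] at hform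
    exact (Finset.sum_eq_zero_iff_of_nonneg fun z _ => hterm_nonneg u z).1
      (hform u (Finset.mem_univ u)) v (Finset.mem_univ v)
  exact (mul_eq_zero.1 huv_term).resolve_right (pow_ne_zero 2 (sub_ne_zero.2 huv))

theorem isBlockDiagonalWrt_crRel_succ [Fintype V] {G : SimpleGraph V} {α : Type} {c : V → α}
    {X : Matrix V V ℝ} (hds : IsDoublyStochastic X) (hcomm : adjMat G * X = X * adjMat G)
    {i : ℕ} (hi : IsBlockDiagonalWrt (crRel G c i) X) :
    IsBlockDiagonalWrt (crRel G c (i + 1)) X := by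
  classical
  intro u v huv
  by_cases hsame : crRel G c i u v
  swap
  · exact hi u v hsame
  obtain ⟨w, hw⟩ : ∃ w, {a | G.Adj u a ∧ crRel G c i a w}.ncard ≠
      {a | G.Adj v a ∧ crRel G c i a w}.ncard := by
    simpa [crRel, hsame] using huv
  set e : V → ℝ := fun a => if crRel G c i a w then 1 else 0
  have he : X *ᵥ e = e := hi.mulVec_indicator (crRel_equivalence G c i) hds.2.1 w
  have hfixed : X *ᵥ (adjMat G *ᵥ e) = adjMat G *ᵥ e := by
    rw [Matrix.mulVec_mulVec, ← hcomm, ← Matrix.mulVec_mulVec, he]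
  refine hds.apply_eq_zero_of_mulVec_eq_self hfixed ?_
  rw [adjMat_mulVec_indicator, adjMat_mulVec_indicator]
  exact_mod_cast hw

theorem isBlockDiagonalWrt_crRel [Fintype V] {G : SimpleGraph V} {α : Type} {c : V → α}
    {X : Matrix V V ℝ} (hds : IsDoublyStochastic X) (hcolor : ∀ u v : V, c u ≠ c v → X u v = 0)
    (hcomm : adjMat G * X = X * adjMat G) (i : ℕ) :
    IsBlockDiagonalWrt (crRel G c i) X := by
  induction i with
  | zero => exact hcolor
  | succ i ih => exact isBlockDiagonalWrt_crRel_succ hds hcomm ih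

theorem fractional_aut_block_diagonal {V : Type} [Fintype V] (G : SimpleGraph V)
    (c : V → ℕ) (X : Matrix V V ℝ)
    (hds : IsDoublyStochastic X)
    (hcolor : ∀ u v : V, c u ≠ c v → X u v = 0)
    (hcomm : adjMat G * X = X * adjMat G) :
    ∀ u v : V, ¬ stableRel G c u v → X u v = 0 := by
  intro u v h
  obtain ⟨i, hi⟩ := not_forall.1 h
  exact isBlockDiagonalWrt_crRel hds hcolor hcomm i u v hi

end ColorRef
end

section
/- The Petersen graph has no equitable partition in which the minimum cardinality of a cell equals 3; in particular, no equitable partition of the Petersen graph contains a cell of size 3 unless it also contains a smaller cell. -/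
namespace ColorRef

variable {V W : Type}

/-!
Let `X` be a cell of size 3 containing `u₀`. The graph induced on `X` is regular of some degree
`d`; by the handshake lemma `3 d` is even, and `d = 2` would be a triangle, so `X` is independent.
For a neighbour `w` of `u₀` with cell `Y`, let `u₀` have `s ≤ 3` neighbours in `Y` and `w` have
`t ≥ 1` neighbours in `X`; double counting the edges between `X` and `Y` gives `3 s = |Y| t`.
Since `X ∪ Y` is a union of cells of size at least 3 in a graph on 10 vertices,
`|Y| ∈ {3, 4, 7}`, hence `|Y| = 3`. If all three neighbours of `u₀` lay in one such `Y`, any other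
vertex of `X` would be adjacent to all of `Y` as well, while distinct vertices of the Petersen
graph have at most one common neighbour. So `u₀` has neighbours in two different cells; with `X`
these cover 9 of the 10 vertices, and the last vertex has no room for its cell.
-/

open Finset

section EquitablePartition

variable {V : Type} {r : V → V → Prop}

def IsSaturated (r : V → V → Prop) (S : Finset V) : Prop :=
  ∀ u ∈ S, ∀ v, r u v → v ∈ S

theorem IsSaturated.union [DecidableEq V] {S T : Finset V} (hS : IsSaturated r S)
    (hT : IsSaturated r T) : IsSaturated r (S ∪ T) := by
  intro u hu v huv
  rcases mem_union.1 hu with hu | hu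
  · exact mem_union_left _ (hS u hu v huv)
  · exact mem_union_right _ (hT u hu v huv)

variable [Fintype V]

open Classical in
noncomputable def cell (r : V → V → Prop) (u : V) : Finset V := {v | r u v}

@[simp]
theorem mem_cell {u v : V} : v ∈ cell r u ↔ r u v := by
  simp [cell]

theorem ncard_setOf_eq_card_cell (u : V) : {v | r u v}.ncard = #(cell r u) := by
  rw [← Set.ncard_coe_finset]
  congr 1
  ext v
  simp

theorem disjoint_cell (hr : Equivalence r) {u v : V} (h : ¬ r u v) :
    Disjoint (cell r u) (cell r v) :=
  disjoint_left.2 fun _ hu hv => h (hr.trans (mem_cell.1 hu) (hr.symm (mem_cell.1 hv)))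

theorem isSaturated_cell (hr : Equivalence r) (u : V) : IsSaturated r (cell r u) :=
  fun _ hv _ hvw => mem_cell.2 (hr.trans (mem_cell.1 hv) hvw)

theorem IsSaturated.card_eq_or_add_le [DecidableEq V] (hr : Equivalence r) {m : ℕ}
    (hmin : ∀ u, m ≤ #(cell r u)) {S : Finset V} (hS : IsSaturated r S) :
    #S = Fintype.card V ∨ #S + m ≤ Fintype.card V := by
  by_cases hSu : ∀ z, z ∈ S
  · exact .inl (by rw [eq_univ_iff_forall.2 hSu, card_univ])
  push Not at hSu
  obtain ⟨z, hz⟩ := hSu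
  have hdisj : Disjoint S (cell r z) :=
    disjoint_left.2 fun v hv hzv => hz (hS v hv z (hr.symm (mem_cell.1 hzv)))
  right
  calc #S + m ≤ #S + #(cell r z) := Nat.add_le_add_left (hmin z) _
    _ = #(S ∪ cell r z) := (card_union_of_disjoint hdisj).symm
    _ ≤ Fintype.card V := card_le_univ _

variable {G : SimpleGraph V} [DecidableRel G.Adj]

theorem card_filter_adj_le_degree (X : Finset V) (u : V) :
    #{a ∈ X | G.Adj u a} ≤ G.degree u := by
  rw [← G.card_neighborFinset_eq_degree, G.neighborFinset_eq_filter]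
  exact card_le_card (filter_subset_filter _ (subset_univ X))

theorem even_sum_card_filter_adj [DecidableEq V] (X : Finset V) :
    Even (∑ x ∈ X, #{y ∈ X | G.Adj x y}) := by
  have hdeg : ∀ x : (X : Set V), (G.induce (X : Set V)).degree x = #{y ∈ X | G.Adj x y} := by
    intro x
    rw [← SimpleGraph.card_neighborFinset_eq_degree, ← card_map (.subtype _)]
    convert congrArg card (G.map_neighborFinset_induce x) using 4
    rw [toFinset_coe, G.neighborFinset_eq_filter, filter_inter, univ_inter]
  have hsum := (G.induce (X : Set V)).sum_degrees_eq_twice_card_edges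
  simp only [hdeg] at hsum
  rw [← sum_coe_sort]
  exact ⟨_, hsum.trans (two_mul _)⟩

theorem eq_zero_of_cliqueFree_three_of_card_filter_adj_eq [DecidableEq V] (hG : G.CliqueFree 3)
    {X : Finset V} (hX : #X = 3) {d : ℕ} (hd : ∀ x ∈ X, #{y ∈ X | G.Adj x y} = d) :
    d = 0 := by
  have hsub : ∀ x ∈ X, {y ∈ X | G.Adj x y} ⊆ X.erase x := fun x _ y hy =>
    mem_erase.2 ⟨(G.ne_of_adj (mem_filter.1 hy).2).symm, (mem_filter.1 hy).1⟩
  have hcard_erase : ∀ x ∈ X, #(X.erase x) = 2 := fun x hx => by rw [card_erase_of_mem hx, hX]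
  obtain ⟨x₀, hx₀⟩ : X.Nonempty := card_pos.1 (by omega)
  have hle : d ≤ 2 := hd x₀ hx₀ ▸ hcard_erase x₀ hx₀ ▸ card_le_card (hsub x₀ hx₀)
  have hne : d ≠ 2 := by
    rintro rfl
    refine hG X ⟨fun x hx y hy hxy => ?_, hX⟩
    have hfull := eq_of_subset_of_card_le (hsub x hx) (by rw [hcard_erase x hx, hd x hx])
    exact (mem_filter.1 (hfull ▸ mem_erase.2 ⟨hxy.symm, hy⟩)).2
  have heven : Even (3 * d) := by
    rw [← hX, ← smul_eq_mul, ← sum_const, ← sum_congr rfl hd]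
    exact even_sum_card_filter_adj X
  rcases Nat.even_mul.1 heven with h | ⟨k, rfl⟩
  · exact absurd h (by decide)
  · omega

theorem Equitable.card_adj_cell_eq (hr : Equivalence r) (he : Equitable G r) {u v : V}
    (huv : r u v) (w : V) : #{a ∈ cell r w | G.Adj u a} = #{a ∈ cell r w | G.Adj v a} := by
  have hncard : ∀ x, {a | G.Adj x a ∧ r a w}.ncard = #{a ∈ cell r w | G.Adj x a} := fun x => by
    rw [← Set.ncard_coe_finset]
    congr 1
    ext a
    simpa [and_comm] using fun _ => ⟨hr.symm, hr.symm⟩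
  rw [← hncard, ← hncard]
  exact he u v w huv

theorem Equitable.card_mul_card_adj_cell (hr : Equivalence r) (he : Equitable G r) (u w : V) :
    #(cell r u) * #{a ∈ cell r w | G.Adj u a} = #(cell r w) * #{a ∈ cell r u | G.Adj w a} :=
  card_mul_eq_card_mul G.Adj
    (fun x hx => he.card_adj_cell_eq hr (hr.symm (mem_cell.1 hx)) w)
    (fun y hy => by
      simp_rw [bipartiteBelow, G.adj_comm _ y]
      exact he.card_adj_cell_eq hr (hr.symm (mem_cell.1 hy)) u)

theorem Equitable.not_adj_of_card_cell_eq_three [DecidableEq V] (hr : Equivalence r)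
    (he : Equitable G r) (hG : G.CliqueFree 3) {u v : V} (hu : #(cell r u) = 3) (huv : r u v) :
    ¬ G.Adj u v := by
  have hzero := eq_zero_of_cliqueFree_three_of_card_filter_adj_eq hG hu fun x hx =>
    he.card_adj_cell_eq hr (hr.symm (mem_cell.1 hx)) u
  exact card_filter_eq_zero_iff.1 hzero v (mem_cell.2 huv)

end EquitablePartition

section Petersen

abbrev PetersenVertex := {s : Finset (Fin 5) // s.card = 2}

instance : DecidableRel petersen.Adj := fun a b =>
  inferInstanceAs (Decidable (Disjoint a.val b.val))

theorem card_petersenVertex : Fintype.card PetersenVertex = 10 := by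
  decide

theorem petersen_degree (u : PetersenVertex) : petersen.degree u = 3 := by
  revert u
  decide

theorem petersen_cliqueFree_three : petersen.CliqueFree 3 := by
  have htri : ∀ a b c : PetersenVertex,
      petersen.Adj a b → petersen.Adj a c → ¬ petersen.Adj b c := by
    decide
  intro s hs
  obtain ⟨a, b, c, hab, hac, hbc, rfl⟩ := SimpleGraph.is3Clique_iff.1 hs
  exact htri a b c hab hac hbc

theorem petersen_card_common_neighbors_le_one {u v : PetersenVertex} (huv : u ≠ v) :
    #{w | petersen.Adj u w ∧ petersen.Adj v w} ≤ 1 := by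
  revert u v
  decide

variable {r : PetersenVertex → PetersenVertex → Prop} {u₀ : PetersenVertex}

theorem not_rel_of_adj (hr : Equivalence r) (he : Equitable petersen r)
    (hu₀ : #(cell r u₀) = 3) {w : PetersenVertex} (hw : petersen.Adj u₀ w) : ¬ r u₀ w :=
  fun h => he.not_adj_of_card_cell_eq_three hr petersen_cliqueFree_three hu₀ h hw

theorem card_cell_of_adj (hr : Equivalence r) (he : Equitable petersen r)
    (hmin : ∀ u, 3 ≤ #(cell r u)) (hu₀ : #(cell r u₀) = 3) {w : PetersenVertex}
    (hw : petersen.Adj u₀ w) : #(cell r w) = 3 := by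
  have hunion := ((isSaturated_cell hr u₀).union (isSaturated_cell hr w)).card_eq_or_add_le hr hmin
  rw [card_union_of_disjoint (disjoint_cell hr (not_rel_of_adj hr he hu₀ hw)), hu₀,
    card_petersenVertex] at hunion
  have hk : #(cell r w) = 3 ∨ #(cell r w) = 4 ∨ #(cell r w) = 7 := by
    have := hmin w
    omega
  have hcount := he.card_mul_card_adj_cell hr u₀ w
  have hs : #{a ∈ cell r w | petersen.Adj u₀ a} ≤ 3 :=
    petersen_degree u₀ ▸ card_filter_adj_le_degree (cell r w) u₀
  have ht : 0 < #{a ∈ cell r u₀ | petersen.Adj w a} :=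
    card_pos.2 ⟨u₀, mem_filter.2 ⟨mem_cell.2 (hr.refl u₀), hw.symm⟩⟩
  rw [hu₀] at hcount
  generalize #{a ∈ cell r w | petersen.Adj u₀ a} = s at hcount hs
  generalize #{a ∈ cell r u₀ | petersen.Adj w a} = t at hcount ht
  generalize #(cell r w) = k at hcount hk ⊢
  rcases hk with rfl | rfl | rfl <;> omega

theorem exists_adj_adj_not_rel (hr : Equivalence r) (he : Equitable petersen r)
    (hmin : ∀ u, 3 ≤ #(cell r u)) (hu₀ : #(cell r u₀) = 3) :
    ∃ w₁ w₂, petersen.Adj u₀ w₁ ∧ petersen.Adj u₀ w₂ ∧ ¬ r w₁ w₂ := by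
  by_contra! hsame
  obtain ⟨w, hw⟩ := (petersen.degree_pos_iff_exists_adj u₀).1 (by rw [petersen_degree]; decide)
  have hY : #(cell r w) = 3 := card_cell_of_adj hr he hmin hu₀ hw
  have hu₀Y : #{a ∈ cell r w | petersen.Adj u₀ a} = 3 := by
    rw [← petersen_degree u₀, ← petersen.card_neighborFinset_eq_degree,
      petersen.neighborFinset_eq_filter]
    congr 1
    ext a
    simpa using hsame w a hw
  obtain ⟨x, hx, hxu₀⟩ := exists_mem_ne (by omega : 1 < #(cell r u₀)) u₀
  have hxY : #{a ∈ cell r w | petersen.Adj x a} = 3 :=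
    he.card_adj_cell_eq hr (mem_cell.1 hx) w ▸ hu₀Y
  have hcommon : cell r w ⊆ ({a | petersen.Adj x a ∧ petersen.Adj u₀ a} : Finset _) :=
    fun a ha => mem_filter.2 ⟨mem_univ a, card_filter_eq_iff.1 (hxY.trans hY.symm) a ha,
      card_filter_eq_iff.1 (hu₀Y.trans hY.symm) a ha⟩
  have := (card_le_card hcommon).trans (petersen_card_common_neighbors_le_one hxu₀)
  omega

end Petersen

theorem petersen_no_equitable_min_three :
    ¬ ∃ r : {s : Finset (Fin 5) // s.card = 2} → {s : Finset (Fin 5) // s.card = 2} → Prop,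
        Equivalence r ∧ Equitable petersen r ∧
        (∀ u, 3 ≤ {v | r u v}.ncard) ∧ (∃ u, {v | r u v}.ncard = 3) := by
  rintro ⟨r, hr, he, hmin, u₀, hu₀⟩
  simp only [ncard_setOf_eq_card_cell] at hmin hu₀
  obtain ⟨w₁, w₂, h₁, h₂, h₁₂⟩ := exists_adj_adj_not_rel hr he hmin hu₀
  have hdisj : Disjoint (cell r u₀ ∪ cell r w₁) (cell r w₂) :=
    disjoint_union_left.2 ⟨disjoint_cell hr (not_rel_of_adj hr he hu₀ h₂), disjoint_cell hr h₁₂⟩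
  have hcover := (((isSaturated_cell hr u₀).union (isSaturated_cell hr w₁)).union
    (isSaturated_cell hr w₂)).card_eq_or_add_le hr hmin
  rw [card_union_of_disjoint hdisj,
    card_union_of_disjoint (disjoint_cell hr (not_rel_of_adj hr he hu₀ h₁)), hu₀,
    card_cell_of_adj hr he hmin hu₀ h₁, card_cell_of_adj hr he hmin hu₀ h₂,
    card_petersenVertex] at hcover
  omega

end ColorRef
end
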